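/- Let 𝕋 be a combinatorial tree forcing. Then the uniformity of the tree ideal equals the continuum: non(t⁰) = 𝔠, where non(t⁰) is the least cardinality of a subset of ω^ω not belonging to t⁰. -/

import Mathlib

/-- The restriction `x↾n` of a sequence `x ∈ ω^ω` to its first `n` values, as a finite sequence. -/
def seqRestrict (x : ℕ → ℕ) (n : ℕ) : List ℕ := List.ofFn fun i : Fin n => x i

/-- A tree on `ω`: a nonempty set of finite sequences closed under initial segments. -/
def IsSeqTree (T : Set (List ℕ)) : Prop :=
  T.Nonempty ∧ ∀ s ∈ T, ∀ t : List ℕ, t <+: s → t ∈ T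

/-- `[T]`, the set of branches of a tree `T ⊆ ω^{<ω}`. -/
def branches (T : Set (List ℕ)) : Set (ℕ → ℕ) := {x | ∀ n : ℕ, seqRestrict x n ∈ T}

/-- `S` and `T` are compatible in `𝕋` (ordered by inclusion) if they have a common extension. -/
def Compat (𝕋 : Set (Set (List ℕ))) (S T : Set (List ℕ)) : Prop :=
  ∃ R ∈ 𝕋, R ⊆ S ∧ R ⊆ T

/-- A combinatorial tree forcing: a collection `𝕋` of trees on `ω` containing the full tree,
closed under restrictions `T_s`, with large disjoint antichains, and homogeneous. -/
structure CombTreeForcing (𝕋 : Set (Set (List ℕ))) : Prop where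
  /-- every member of `𝕋` is a tree -/
  isTree : ∀ T ∈ 𝕋, IsSeqTree T
  /-- (1) `ω^{<ω} ∈ 𝕋` -/
  univ_mem : (Set.univ : Set (List ℕ)) ∈ 𝕋
  /-- (2) closure under subtrees `T_s` -/
  restrict_mem : ∀ T ∈ 𝕋, ∀ s ∈ T, {t ∈ T | s <+: t ∨ t <+: s} ∈ 𝕋
  /-- (3) large disjoint antichains: a continuous `f : ω^ω → 2^ω` all of whose fibers are
  branch sets of trees in `𝕋` -/
  large_disjoint : ∃ f : (ℕ → ℕ) → (ℕ → Bool), Continuous f ∧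
      ∀ x : ℕ → Bool, ∃ T ∈ 𝕋, f ⁻¹' {x} = branches T
  /-- (4) homogeneity: below every `T ∈ 𝕋` there is an order-preserving injective copy
  `i : ω^{<ω} → T` of the full tree inducing a homeomorphism `g : ω^ω → [T]`,
  `g(x) = ⋃_n i(x↾n)`, such that `S ∈ 𝕋` iff the downward closure of `i''S` is in `𝕋`. -/
  homogeneity : ∀ T ∈ 𝕋, ∃ i : List ℕ → List ℕ,
      Function.Injective i ∧ (∀ s t : List ℕ, s <+: t → i s <+: i t) ∧
      (∀ s : List ℕ, i s ∈ T) ∧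
      ∃ g : (ℕ → ℕ) → (ℕ → ℕ),
        (∀ (x : ℕ → ℕ) (n : ℕ),
          i (seqRestrict x n) = seqRestrict (g x) (i (seqRestrict x n)).length) ∧
        Topology.IsEmbedding g ∧ Set.range g = branches T ∧
        ∀ S : Set (List ℕ), IsSeqTree S → (S ∈ 𝕋 ↔ {t | ∃ s ∈ S, t <+: i s} ∈ 𝕋)

/-- The tree ideal `t⁰` associated with `𝕋`: all `X ⊆ ω^ω` such that below every `T ∈ 𝕋`
there is `S ∈ 𝕋` with `X ∩ [S] = ∅`. -/
def treeIdeal (𝕋 : Set (Set (List ℕ))) : Set (Set (ℕ → ℕ)) :=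
  {X | ∀ T ∈ 𝕋, ∃ S ∈ 𝕋, S ⊆ T ∧ X ∩ branches S = ∅}

/-- The cofinality `cof(I)` of an ideal `I`: the least cardinality of a family `J ⊆ I`
such that every member of `I` is contained in a member of `J`. -/
noncomputable def idealCof (I : Set (Set (ℕ → ℕ))) : Cardinal :=
  sInf {c : Cardinal | ∃ J ⊆ I, Cardinal.mk J = c ∧ ∀ X ∈ I, ∃ Y ∈ J, X ⊆ Y}

/-- The uniformity `non(I)` of an ideal `I`: the least cardinality of a set of reals
not belonging to `I`. -/
noncomputable def idealNon (I : Set (Set (ℕ → ℕ))) : Cardinal :=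
  sInf {c : Cardinal | ∃ X : Set (ℕ → ℕ), Cardinal.mk X = c ∧ X ∉ I}

/-!
`ω^ω ∉ t⁰` since every `[S]`, `S ∈ 𝕋`, is nonempty. Conversely let `#X < 𝔠` and `T ∈ 𝕋`.
Homogeneity gives a copy `i` of `ω^{<ω}` inside `T` whose induced map `g : ω^ω → [T]` is a
homeomorphism. The fibers of the map `f` of (3) are `𝔠` many pairwise disjoint sets `[Tₓ]`, so one
of them misses `g⁻¹ X`. The downward closure `S` of `i '' Tₓ` lies in `𝕋` below `T`, and `[S]`
misses `X` because `g⁻¹ [S] ⊆ [Tₓ]`. For this inclusion, write a branch of `S` as `g z` and pick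
nodes `sₘ ∈ Tₓ` with `g z ↾ m ⊆ i sₘ`. Since `g` is an embedding, the `sₘ`, padded with zeros,
converge to `z`; since only finitely many nodes along `z` are shorter than `k` while the `i sₘ`
grow, the `sₘ` eventually extend `z ↾ k`. So `z ↾ k ∈ Tₓ` for every `k`.
-/

open Filter Topology PiNat

lemma seqRestrict_length (x : ℕ → ℕ) (n : ℕ) : (seqRestrict x n).length = n :=
  List.length_ofFn

lemma seqRestrict_eq_seqRestrict_iff {x y : ℕ → ℕ} {n : ℕ} :
    seqRestrict x n = seqRestrict y n ↔ x ∈ cylinder y n := by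
  simp [seqRestrict, funext_iff, Fin.forall_iff]

lemma seqRestrict_prefix_seqRestrict (x : ℕ → ℕ) {m n : ℕ} (h : m ≤ n) :
    seqRestrict x m <+: seqRestrict x n := by
  rw [List.prefix_iff_eq_take]
  apply List.ext_getElem <;> simp [seqRestrict, h]

lemma mem_cylinder_of_seqRestrict_prefix {x y : ℕ → ℕ} {m n : ℕ}
    (h : seqRestrict x m <+: seqRestrict y n) : x ∈ cylinder y m := fun j hj => by
  simpa [seqRestrict] using h.getElem (by rwa [seqRestrict_length])

lemma tendsto_of_forall_mem_cylinder {u : ℕ → ℕ → ℕ} {x : ℕ → ℕ}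
    (h : ∀ m, u m ∈ cylinder x m) : Tendsto u atTop (𝓝 x) :=
  tendsto_pi_nhds.2 fun j => tendsto_const_nhds.congr' <|
    (eventually_gt_atTop j).mono fun m hm => (h m j hm).symm

def padZero (s : List ℕ) : ℕ → ℕ := fun j => s.getD j 0

lemma seqRestrict_padZero (s : List ℕ) : seqRestrict (padZero s) s.length = s := by
  apply List.ext_getElem <;> simp [seqRestrict, padZero]

lemma eventually_seqRestrict_prefix {φ : List ℕ → ℕ} {s : ℕ → List ℕ} {z : ℕ → ℕ}
    (hs : Tendsto (fun m => padZero (s m)) atTop (𝓝 z))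
    (hφ : Tendsto (fun m => φ (s m)) atTop atTop) (k : ℕ) :
    ∀ᶠ m in atTop, seqRestrict z k <+: s m := by
  have hcyl : ∀ᶠ m in atTop, padZero (s m) ∈ cylinder z k :=
    hs ((isOpen_cylinder _ z k).mem_nhds (self_mem_cylinder z k))
  have hbig : ∀ᶠ m in atTop, ∀ j ∈ Set.Iio k, φ (seqRestrict z j) < φ (s m) :=
    (eventually_all_finite (Set.finite_Iio k)).2 fun j _ => hφ.eventually_gt_atTop _
  filter_upwards [hcyl, hbig] with m hcyl hbig
  have hagree : ∀ n ≤ k, seqRestrict (padZero (s m)) n = seqRestrict z n := fun n hn =>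
    seqRestrict_eq_seqRestrict_iff.2 (cylinder_anti z hn hcyl)
  by_cases hk : k ≤ (s m).length
  · rw [← seqRestrict_padZero (s m), ← hagree k le_rfl]
    exact seqRestrict_prefix_seqRestrict _ hk
  · have hk : (s m).length < k := not_le.1 hk
    have := hbig _ hk
    rw [← hagree _ hk.le, seqRestrict_padZero] at this
    exact absurd this (lt_irrefl _)

section Homogeneity

variable {i : List ℕ → List ℕ} {g : (ℕ → ℕ) → (ℕ → ℕ)}

lemma tendsto_padZero_of_prefix
    (hgi : ∀ x n, i (seqRestrict x n) = seqRestrict (g x) (i (seqRestrict x n)).length)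
    (hg : IsEmbedding g) {z : ℕ → ℕ} {s : ℕ → List ℕ}
    (hs : ∀ m, seqRestrict (g z) m <+: i (s m)) :
    Tendsto (fun m => padZero (s m)) atTop (𝓝 z) := by
  rw [hg.tendsto_nhds_iff]
  refine tendsto_of_forall_mem_cylinder fun m => (mem_cylinder_comm _ _ _).1 ?_
  have hi := hgi (padZero (s m)) (s m).length
  rw [seqRestrict_padZero] at hi
  exact mem_cylinder_of_seqRestrict_prefix (hi ▸ hs m)

lemma preimage_branches_subset
    (hgi : ∀ x n, i (seqRestrict x n) = seqRestrict (g x) (i (seqRestrict x n)).length)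
    (hg : IsEmbedding g) {U : Set (List ℕ)} (hU : ∀ s ∈ U, ∀ t, t <+: s → t ∈ U) :
    g ⁻¹' branches {t | ∃ s ∈ U, t <+: i s} ⊆ branches U := by
  intro z hz k
  choose s hsU hs using hz
  have hlen : Tendsto (fun m => (i (s m)).length) atTop atTop :=
    tendsto_atTop_mono (fun m => by simpa [seqRestrict_length] using (hs m).length_le) tendsto_id
  obtain ⟨m, hm⟩ :=
    (eventually_seqRestrict_prefix (φ := fun s => (i s).length)
      (tendsto_padZero_of_prefix hgi hg hs) hlen k).exists
  exact hU _ (hsU m) _ hm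

end Homogeneity

lemma branches_mono {S T : Set (List ℕ)} (h : S ⊆ T) : branches S ⊆ branches T :=
  fun _ hx n => h (hx n)

namespace CombTreeForcing

variable {𝕋 : Set (Set (List ℕ))}

lemma branches_nonempty (h𝕋 : CombTreeForcing 𝕋) {T : Set (List ℕ)} (hT : T ∈ 𝕋) :
    (branches T).Nonempty := by
  obtain ⟨-, -, -, -, g, -, -, hg_range, -⟩ := h𝕋.homogeneity T hT
  exact hg_range ▸ Set.range_nonempty g

lemma univ_notMem_treeIdeal (h𝕋 : CombTreeForcing 𝕋) : Set.univ ∉ treeIdeal 𝕋 := fun h => by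
  obtain ⟨S, hS, -, hempty⟩ := h Set.univ h𝕋.univ_mem
  rw [Set.univ_inter] at hempty
  exact (h𝕋.branches_nonempty hS).ne_empty hempty

lemma mem_treeIdeal_of_mk_lt (h𝕋 : CombTreeForcing 𝕋) {X : Set (ℕ → ℕ)}
    (hX : Cardinal.mk X < Cardinal.continuum) : X ∈ treeIdeal 𝕋 := by
  intro T hT
  obtain ⟨i, -, -, hiT, g, hgi, hg, hg_range, hiff⟩ := h𝕋.homogeneity T hT
  obtain ⟨f, -, hfib⟩ := h𝕋.large_disjoint
  obtain ⟨x, hx⟩ : ∃ x, x ∉ f '' (g ⁻¹' X) := by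
    refine (Set.ne_univ_iff_exists_notMem _).1 fun h => ?_
    have := ((Cardinal.mk_image_le (f := f)).trans
      (Cardinal.mk_preimage_of_injective g X hg.injective)).trans_lt hX
    simp [h] at this
  obtain ⟨U, hU, hUfib⟩ := hfib x
  have hST : {t | ∃ s ∈ U, t <+: i s} ⊆ T := fun t ⟨s, _, hts⟩ =>
    (h𝕋.isTree T hT).2 _ (hiT s) t hts
  refine ⟨_, (hiff U (h𝕋.isTree U hU)).1 hU, hST, ?_⟩
  refine Set.eq_empty_of_forall_notMem fun y ⟨hyX, hyS⟩ => ?_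
  obtain ⟨z, rfl⟩ : y ∈ Set.range g := hg_range ▸ branches_mono hST hyS
  have hzU : z ∈ f ⁻¹' {x} := hUfib ▸ preimage_branches_subset hgi hg (h𝕋.isTree U hU).2 hyS
  exact hx ⟨z, hyX, hzU⟩

end CombTreeForcing

lemma idealNon_eq_of_forall_mk_lt_mem {I : Set (Set (ℕ → ℕ))} {X : Set (ℕ → ℕ)} (hX : X ∉ I)
    (hI : ∀ Y : Set (ℕ → ℕ), Cardinal.mk Y < Cardinal.mk X → Y ∈ I) :
    idealNon I = Cardinal.mk X :=
  le_antisymm (csInf_le' ⟨X, rfl, hX⟩) <|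
    le_csInf ⟨_, X, rfl, hX⟩ fun _ ⟨Y, hY, hYI⟩ => hY ▸ not_lt.1 fun h => hYI (hI Y h)

/-- For any combinatorial tree forcing `𝕋`, the uniformity of the tree ideal equals the
continuum: `non(t⁰) = 𝔠`. -/
theorem non_treeIdeal_eq_continuum (𝕋 : Set (Set (List ℕ))) (hctf : CombTreeForcing 𝕋) :
    idealNon (treeIdeal 𝕋) = Cardinal.continuum := by
  have hcard : Cardinal.mk (Set.univ : Set (ℕ → ℕ)) = Cardinal.continuum := by simp
  rw [← hcard]
  exact idealNon_eq_of_forall_mk_lt_mem hctf.univ_notMem_treeIdeal fun Y hY =>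
    hctf.mem_treeIdeal_of_mk_lt (hcard ▸ hY)
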